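/- arXiv:1304.3780 — 2 statements merged into one kernel-verified Lean document; each statement's English description precedes it below -/
import Mathlib

section
/- Let n ≥ 1 and let h : (Fin n → Fin 3) → ℝ satisfy h = 0 on the corner set {A, B, C} and h(s) = 1 + (1/deg s)·Σ_{t adjacent to s} h(t) for every non-corner state s of the Hanoi graph H_n. Then 1 + (1/2)·Σ_{t adjacent to A} h(t) = (3^n − 1)/2. (This is the expected number of random moves, starting with all disks on the first peg, until all disks are again on one peg, with at least one move required; the corner A has exactly two neighbors.) -/
/-- The Hanoi graph `H_n`: vertices are states `s : Fin n → Fin 3` (`s k` is the peg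
holding the disk of size `k+1`); two distinct states are adjacent iff a single disk moves
and it is topmost on both its source and destination pegs. -/
def hanoi (n : ℕ) : SimpleGraph (Fin n → Fin 3) where
  Adj s t := ∃ k : Fin n, (∀ j, j ≠ k → s j = t j) ∧ s k ≠ t k ∧
    ∀ j, j < k → s j ≠ s k ∧ s j ≠ t k
  symm := by
    constructor
    rintro s t ⟨k, h1, h2, h3⟩
    refine ⟨k, fun j hj => (h1 j hj).symm, h2.symm, fun j hj => ?_⟩
    rw [← h1 j hj.ne]
    exact ⟨(h3 j hj).2, (h3 j hj).1⟩
  loopless := by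
    constructor
    rintro s ⟨k, _, h2, _⟩
    exact h2 rfl

instance hanoiAdjDecidable (n : ℕ) : DecidableRel (hanoi n).Adj := fun s t =>
  inferInstanceAs (Decidable (∃ k : Fin n, (∀ j, j ≠ k → s j = t j) ∧ s k ≠ t k ∧
    ∀ j, j < k → s j ≠ s k ∧ s j ≠ t k))

/-- The corner state with all disks on peg `p`. -/
def corner (n : ℕ) (p : Fin 3) : Fin n → Fin 3 := fun _ => p

/-- The state `s½`: the largest disk on the second peg, all other disks on the first peg. -/
def halfState (n : ℕ) : Fin n → Fin 3 := fun k => if (k : ℕ) < n - 1 then 0 else 1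


namespace HanoiAux

open Function Finset

lemma fin3_third : ∀ a x : Fin 3, x ≠ a → -(a+x) ≠ x ∧ -(a+x) ≠ a := by decide
lemma fin3_cases : ∀ a y : Fin 3, y ≠ a → y = a + 1 ∨ y = a + 2 := by decide
lemma fin3_four : ∀ a x y w : Fin 3, x = a ∨ y = a ∨ y = x ∨ w = a ∨ w = x ∨ w = y := by decide
lemma fin3_eq_third : ∀ a x w : Fin 3, x ≠ a → w ≠ x → w ≠ a → w = -(a+x) := by decide
lemma fin3_add : ∀ a : Fin 3, a + 1 ≠ a + 2 ∧ a + 1 ≠ a ∧ a + 2 ≠ a := by decide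

variable {n : ℕ}

lemma not_lt_z (hn : 1 ≤ n) (j : Fin n) : ¬ j < (⟨0, hn⟩ : Fin n) := by
  simp [Fin.lt_def]

lemma z_le (hn : 1 ≤ n) (j : Fin n) : (⟨0, hn⟩ : Fin n) ≤ j := by
  simp [Fin.le_def]

lemma hanoi_neighbors (hn : 1 ≤ n) (s : Fin n → Fin 3) (hs : ∀ p, s ≠ corner n p) :
    ∃ k : Fin n, k ≠ ⟨0, hn⟩ ∧ s k ≠ s ⟨0, hn⟩ ∧
      (hanoi n).neighborFinset s =
        {Function.update s ⟨0,hn⟩ (s ⟨0,hn⟩ + 1),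
         Function.update s ⟨0,hn⟩ (s ⟨0,hn⟩ + 2),
         Function.update s k (-(s ⟨0,hn⟩ + s k))} := by
  have hz : True := trivial
  set z : Fin n := ⟨0, hn⟩ with hzdef
  have hne : (univ.filter (fun j => s j ≠ s z)).Nonempty := by
    by_contra hemp
    rw [Finset.not_nonempty_iff_eq_empty] at hemp
    refine hs (s z) (funext fun j => ?_)
    by_contra hj
    have : j ∈ univ.filter (fun j => s j ≠ s z) := by
      simp only [mem_filter, mem_univ, true_and]
      exact hj
    simp [hemp] at this
  obtain ⟨k, hkmem, hkmin⟩ : ∃ k, k ∈ univ.filter (fun j => s j ≠ s z) ∧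
      ∀ j ∈ univ.filter (fun j => s j ≠ s z), k ≤ j :=
    ⟨_, (univ.filter (fun j => s j ≠ s z)).min'_mem hne, fun j hj => Finset.min'_le _ j hj⟩
  have hk : s k ≠ s z := (mem_filter.1 hkmem).2
  have hmin : ∀ j, j < k → s j = s z := by
    intro j hj
    by_contra hjne
    exact absurd (hkmin j (by simp only [mem_filter, mem_univ, true_and]; exact hjne))
      (not_le.2 hj)
  have hzk : z ≠ k := fun e => hk (by rw [← e])
  refine ⟨k, hzk.symm, hk, ?_⟩
  ext t
  rw [SimpleGraph.mem_neighborFinset]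
  constructor
  · rintro ⟨k', h1, h2, h3⟩
    have hteq : t = Function.update s k' (t k') := by
      funext j
      rcases eq_or_ne j k' with rfl | hj
      · simp
      · simp [Function.update_of_ne hj, (h1 j hj).symm]
    by_cases hk' : k' = z
    · rw [hk'] at h2 hteq
      rcases fin3_cases (s z) (t z) h2.symm with he | he
      · simp only [mem_insert, mem_singleton]
        exact Or.inl (by rw [hteq, he])
      · simp only [mem_insert, mem_singleton]
        exact Or.inr (Or.inl (by rw [hteq, he]))
    · have hzk' : z < k' := lt_of_le_of_ne (z_le hn k') (Ne.symm hk')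
      have h0 := h3 z hzk'
      have hkk' : k ≤ k' := hkmin k' (by
        simp only [mem_filter, mem_univ, true_and]
        exact fun e => h0.1 e.symm)
      have hkeq : k' = k := by
        rcases eq_or_lt_of_le hkk' with he | hlt
        · exact he.symm
        · exfalso
          have h4 := h3 k hlt
          rcases fin3_four (s z) (s k) (s k') (t k') with e|e|e|e|e|e
          · exact hk e
          · exact h0.1 e.symm
          · exact h4.1 e.symm
          · exact h0.2 e.symm
          · exact h4.2 e.symm
          · exact h2 e.symm
      subst hkeq
      have htk : t k' = -(s z + s k') := fin3_eq_third (s z) (s k') (t k') hk h2.symm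
        (fun e => h0.2 e.symm)
      simp only [mem_insert, mem_singleton]
      exact Or.inr (Or.inr (by rw [hteq, htk]))
  · intro ht
    simp only [mem_insert, mem_singleton] at ht
    rcases ht with rfl | rfl | rfl
    · refine ⟨z, fun j hj => (Function.update_of_ne hj _ _).symm, ?_,
        fun j hj => absurd hj (not_lt_z hn j)⟩
      rw [Function.update_self]
      exact (fin3_add (s z)).2.1.symm
    · refine ⟨z, fun j hj => (Function.update_of_ne hj _ _).symm, ?_,
        fun j hj => absurd hj (not_lt_z hn j)⟩
      rw [Function.update_self]
      exact (fin3_add (s z)).2.2.symm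
    · refine ⟨k, fun j hj => (Function.update_of_ne hj _ _).symm, ?_, ?_⟩
      · rw [Function.update_self]
        exact ((fin3_third (s z) (s k) hk).1).symm
      · intro j hj
        rw [hmin j hj, Function.update_self]
        exact ⟨hk.symm, (fin3_third (s z) (s k) hk).2.symm⟩

lemma degree_eq_three (hn : 1 ≤ n) (s : Fin n → Fin 3) (hs : ∀ p, s ≠ corner n p) :
    (hanoi n).degree s = 3 := by
  obtain ⟨k, hkz, hk, hN⟩ := hanoi_neighbors hn s hs
  rw [SimpleGraph.degree, hN]
  set z : Fin n := ⟨0, hn⟩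
  have h12 : Function.update s z (s z + 1) ≠ Function.update s z (s z + 2) := by
    intro e
    have := congrFun e z
    simp [(fin3_add (s z)).1] at this
  have h13 : Function.update s z (s z + 1) ≠ Function.update s k (-(s z + s k)) := by
    intro e
    have := congrFun e z
    rw [Function.update_self, Function.update_of_ne hkz.symm] at this
    exact (fin3_add (s z)).2.1 this
  have h23 : Function.update s z (s z + 2) ≠ Function.update s k (-(s z + s k)) := by
    intro e
    have := congrFun e z
    rw [Function.update_self, Function.update_of_ne hkz.symm] at this
    exact (fin3_add (s z)).2.2 this
  rw [card_insert_of_notMem (by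
      rw [mem_insert, mem_singleton]
      rintro (e | e)
      exacts [h12 e, h13 e]),
    card_insert_of_notMem (by rw [mem_singleton]; exact h23), card_singleton]

lemma adj_snoc {n : ℕ} {s t : Fin n → Fin 3} (p : Fin 3) (h : (hanoi n).Adj s t) :
    (hanoi (n+1)).Adj (Fin.snoc s p) (Fin.snoc t p) := by
  obtain ⟨k, h1, h2, h3⟩ := h
  refine ⟨k.castSucc, ?_, ?_, ?_⟩
  · intro j hj
    obtain ⟨i, rfl⟩ | rfl := Fin.eq_castSucc_or_eq_last j
    · rw [Fin.snoc_castSucc, Fin.snoc_castSucc]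
      exact h1 i (fun e => hj (by rw [e]))
    · rw [Fin.snoc_last, Fin.snoc_last]
  · rw [Fin.snoc_castSucc, Fin.snoc_castSucc]
    exact h2
  · intro j hj
    obtain ⟨i, rfl⟩ | rfl := Fin.eq_castSucc_or_eq_last j
    · rw [Fin.snoc_castSucc, Fin.snoc_castSucc, Fin.snoc_castSucc]
      exact h3 i (by rwa [Fin.castSucc_lt_castSucc_iff] at hj)
    · exact absurd hj (lt_asymm (Fin.castSucc_lt_last k))

lemma adj_snoc_last {n : ℕ} (q p r : Fin 3) (hqp : q ≠ p) (hqr : q ≠ r) (hpr : p ≠ r) :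
    (hanoi (n+1)).Adj (Fin.snoc (corner n q) p) (Fin.snoc (corner n q) r) := by
  refine ⟨Fin.last n, ?_, ?_, ?_⟩
  · intro j hj
    obtain ⟨i, rfl⟩ | rfl := Fin.eq_castSucc_or_eq_last j
    · rw [Fin.snoc_castSucc, Fin.snoc_castSucc]
    · exact absurd rfl hj
  · rw [Fin.snoc_last, Fin.snoc_last]
    exact hpr
  · intro j hj
    obtain ⟨i, rfl⟩ | rfl := Fin.eq_castSucc_or_eq_last j
    · rw [Fin.snoc_castSucc, Fin.snoc_last, Fin.snoc_last]
      exact ⟨hqp, hqr⟩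
    · exact absurd hj (lt_irrefl _)

lemma snoc_corner {n : ℕ} (q : Fin 3) :
    (Fin.snoc (corner n q) q : Fin (n+1) → Fin 3) = corner (n+1) q := by
  funext j
  obtain ⟨i, rfl⟩ | rfl := Fin.eq_castSucc_or_eq_last j
  · rw [Fin.snoc_castSucc]; rfl
  · rw [Fin.snoc_last]; rfl

lemma reach_lift {n : ℕ} (v : Fin 3) {a b : Fin n → Fin 3}
    (hab : (hanoi n).Reachable a b) :
    (hanoi (n+1)).Reachable (Fin.snoc a v) (Fin.snoc b v) :=
  hab.map (⟨fun x => Fin.snoc x v, fun h => adj_snoc v h⟩ : hanoi n →g hanoi (n+1))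

lemma reach_corner : ∀ (n : ℕ) (s : Fin (n+1) → Fin 3) (q : Fin 3),
    (hanoi (n+1)).Reachable s (corner (n+1) q) := by
  intro n
  induction n with
  | zero =>
    intro s q
    have hall : ∀ j : Fin (0+1), j = 0 := fun j => Fin.ext (by omega)
    by_cases h : s = corner 1 q
    · rw [h]
    · refine SimpleGraph.Adj.reachable ⟨0, ?_, ?_, ?_⟩
      · intro j hj
        exact absurd (hall j) hj
      · intro e
        exact h (funext fun j => by rw [hall j]; exact e)
      · intro j hj
        rw [hall j] at hj
        exact absurd hj (lt_irrefl _)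
  | succ m ih =>
    intro s q
    have hdec : s = Fin.snoc (Fin.init s) (s (Fin.last (m+1))) := (Fin.snoc_init_self s).symm
    by_cases hpq : s (Fin.last (m+1)) = q
    · rw [hdec, hpq, ← snoc_corner q]
      exact reach_lift q (ih (Fin.init s) q)
    · have h3 := fin3_third (s (Fin.last (m+1))) q (Ne.symm hpq)
      rw [hdec]
      refine (reach_lift _ (ih (Fin.init s) (-(s (Fin.last (m+1)) + q)))).trans ?_
      refine (SimpleGraph.Adj.reachable
        (adj_snoc_last _ _ q h3.2 h3.1 hpq)).trans ?_
      rw [← snoc_corner q]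
      exact reach_lift q (ih (corner (m+1) (-(s (Fin.last (m+1)) + q))) q)

lemma reach_corner0 (hn : 1 ≤ n) (s : Fin n → Fin 3) :
    (hanoi n).Reachable s (corner n 0) := by
  obtain ⟨m, rfl⟩ : ∃ m, n = m + 1 := ⟨n - 1, by omega⟩
  exact reach_corner m s 0

lemma sol_le (hn : 1 ≤ n) (h₁ h₂ : (Fin n → Fin 3) → ℝ)
    (hc₁ : ∀ p : Fin 3, h₁ (corner n p) = 0)
    (hr₁ : ∀ s, (∀ p : Fin 3, s ≠ corner n p) →
      h₁ s = 1 + (1 / ((hanoi n).degree s : ℝ)) * ∑ t ∈ (hanoi n).neighborFinset s, h₁ t)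
    (hc₂ : ∀ p : Fin 3, h₂ (corner n p) = 0)
    (hr₂ : ∀ s, (∀ p : Fin 3, s ≠ corner n p) →
      h₂ s = 1 + (1 / ((hanoi n).degree s : ℝ)) * ∑ t ∈ (hanoi n).neighborFinset s, h₂ t)
    (s : Fin n → Fin 3) : h₁ s ≤ h₂ s := by
  classical
  set d : (Fin n → Fin 3) → ℝ := fun u => h₁ u - h₂ u with hd
  obtain ⟨b, -, hb⟩ := Finset.exists_max_image Finset.univ d Finset.univ_nonempty
  have hb' : ∀ u, d u ≤ d b := fun u => hb u (mem_univ u)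
  have key : ∀ (u c : Fin n → Fin 3) (w : (hanoi n).Walk u c),
      (∃ p : Fin 3, c = corner n p) → d u = d b → d b ≤ 0 := by
    intro u c w
    induction w with
    | nil =>
      rintro ⟨p, rfl⟩ he
      rw [← he, hd]
      simp [hc₁ p, hc₂ p]
    | @cons u v _ hadj w ih =>
      intro hcor he
      by_cases hu : ∀ p : Fin 3, u ≠ corner n p
      · have hd3 : (hanoi n).degree u = 3 := degree_eq_three hn u hu
        have e1 := hr₁ u hu
        have e2 := hr₂ u hu
        rw [hd3] at e1 e2
        have hs1 : ∑ t ∈ (hanoi n).neighborFinset u, h₁ t = 3 * h₁ u - 3 := by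
          rw [e1]; push_cast; ring
        have hs2 : ∑ t ∈ (hanoi n).neighborFinset u, h₂ t = 3 * h₂ u - 3 := by
          rw [e2]; push_cast; ring
        have hsum : ∑ t ∈ (hanoi n).neighborFinset u, d t = 3 * d u := by
          rw [hd]
          rw [Finset.sum_sub_distrib, hs1, hs2]
          ring
        have hvm : d v = d b := by
          by_contra hne
          have hlt :
              ∑ t ∈ (hanoi n).neighborFinset u, d t
                < ∑ t ∈ (hanoi n).neighborFinset u, d b :=
            Finset.sum_lt_sum (fun i _ => hb' i)
              ⟨v, (SimpleGraph.mem_neighborFinset _ _ _).mpr hadj,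
                lt_of_le_of_ne (hb' v) hne⟩
          have hc3 : ((hanoi n).neighborFinset u).card = 3 := hd3
          rw [hsum, he, Finset.sum_const, nsmul_eq_mul, hc3] at hlt
          push_cast at hlt
          linarith
        exact ih hcor hvm
      · push_neg at hu
        obtain ⟨p, hp⟩ := hu
        rw [← he, hp, hd]
        simp [hc₁ p, hc₂ p]
  obtain ⟨w⟩ := reach_corner0 hn b
  have hb0 : h₁ b - h₂ b ≤ 0 := key b (corner n 0) w ⟨0, rfl⟩ rfl
  have hthis : h₁ s - h₂ s ≤ h₁ b - h₂ b := hb' s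
  linarith

lemma sol_unique (hn : 1 ≤ n) (h₁ h₂ : (Fin n → Fin 3) → ℝ)
    (hc₁ : ∀ p : Fin 3, h₁ (corner n p) = 0)
    (hr₁ : ∀ s, (∀ p : Fin 3, s ≠ corner n p) →
      h₁ s = 1 + (1 / ((hanoi n).degree s : ℝ)) * ∑ t ∈ (hanoi n).neighborFinset s, h₁ t)
    (hc₂ : ∀ p : Fin 3, h₂ (corner n p) = 0)
    (hr₂ : ∀ s, (∀ p : Fin 3, s ≠ corner n p) →
      h₂ s = 1 + (1 / ((hanoi n).degree s : ℝ)) * ∑ t ∈ (hanoi n).neighborFinset s, h₂ t) :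
    h₁ = h₂ :=
  funext fun s => le_antisymm (sol_le hn h₁ h₂ hc₁ hr₁ hc₂ hr₂ s)
    (sol_le hn h₂ h₁ hc₂ hr₂ hc₁ hr₁ s)

def rot (n : ℕ) (v : Fin 3) (s : Fin n → Fin 3) : Fin n → Fin 3 := fun i => s i + v

lemma rot_inj (v : Fin 3) : Function.Injective (rot n v) := fun a b e =>
  funext fun i => add_right_cancel (congrFun e i : a i + v = b i + v)

lemma rot_rot_neg (v : Fin 3) (s : Fin n → Fin 3) : rot n v (rot n (-v) s) = s :=
  funext fun i => neg_add_cancel_right (s i) v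

lemma rot_neg_rot (v : Fin 3) (s : Fin n → Fin 3) : rot n (-v) (rot n v s) = s :=
  funext fun i => add_neg_cancel_right (s i) v

lemma rot_corner (v p : Fin 3) : rot n v (corner n p) = corner n (p + v) := rfl

lemma adj_rot {v : Fin 3} {s t : Fin n → Fin 3} (h : (hanoi n).Adj s t) :
    (hanoi n).Adj (rot n v s) (rot n v t) := by
  obtain ⟨k, h1, h2, h3⟩ := h
  refine ⟨k, fun j hj => by rw [rot, rot, h1 j hj], fun e => h2 (add_right_cancel e),
    fun j hj => ⟨fun e => (h3 j hj).1 (add_right_cancel e),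
      fun e => (h3 j hj).2 (add_right_cancel e)⟩⟩

lemma neighborFinset_rot (v : Fin 3) (s : Fin n → Fin 3) :
    (hanoi n).neighborFinset (rot n v s) = ((hanoi n).neighborFinset s).image (rot n v) := by
  ext u
  rw [SimpleGraph.mem_neighborFinset, Finset.mem_image]
  constructor
  · intro h
    refine ⟨rot n (-v) u, ?_, rot_rot_neg v u⟩
    rw [SimpleGraph.mem_neighborFinset]
    have := adj_rot (v := -v) h
    rwa [rot_neg_rot] at this
  · rintro ⟨t, ht, rfl⟩
    exact adj_rot ((SimpleGraph.mem_neighborFinset _ _ _).mp ht)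

lemma degree_rot (v : Fin 3) (s : Fin n → Fin 3) :
    (hanoi n).degree (rot n v s) = (hanoi n).degree s := by
  rw [SimpleGraph.degree, SimpleGraph.degree, neighborFinset_rot,
    Finset.card_image_of_injective _ (rot_inj v)]

lemma corner_injective (hn : 1 ≤ n) {p q : Fin 3} (e : corner n p = corner n q) : p = q :=
  congrFun e ⟨0, hn⟩

end HanoiAux

open Finset HanoiAux

/-- starting at corner `A`, the expected number of moves until all disks
are again on one peg (at least one move required) equals `(3^n − 1)/2`. -/
theorem hanoi_one_to_any (n : ℕ) (hn : 1 ≤ n)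
    (h : (Fin n → Fin 3) → ℝ)
    (hcorner : ∀ p : Fin 3, h (corner n p) = 0)
    (hrec : ∀ s, (∀ p : Fin 3, s ≠ corner n p) →
      h s = 1 + (1 / ((hanoi n).degree s : ℝ)) * ∑ t ∈ (hanoi n).neighborFinset s, h t) :
    1 + (1 / 2 : ℝ) * ∑ t ∈ (hanoi n).neighborFinset (corner n 0), h t
      = ((3 : ℝ) ^ n - 1) / 2 := by
  classical
  -- rotation invariance of h
  have hrotsol : ∀ v : Fin 3, (fun s => h (rot n v s)) = h := by
    intro v
    refine sol_unique hn _ h (fun p => ?_) (fun s hs => ?_) hcorner hrec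
    · show h (rot n v (corner n p)) = 0
      rw [rot_corner]
      exact hcorner _
    · show h (rot n v s) = _
      have hsnc : ∀ p : Fin 3, rot n v s ≠ corner n p := by
        intro p e
        apply hs (p + -v)
        have := congrArg (rot n (-v)) e
        rwa [rot_neg_rot, rot_corner] at this
      have := hrec _ hsnc
      rw [this, degree_rot, neighborFinset_rot,
        Finset.sum_image (fun a _ b _ e => rot_inj v e)]
  have hSym : ∀ v : Fin 3,
      ∑ t ∈ (hanoi n).neighborFinset (corner n v), h t
        = ∑ t ∈ (hanoi n).neighborFinset (corner n 0), h t := by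
    intro v
    have e : corner n v = rot n v (corner n 0) := by rw [rot_corner, zero_add]
    rw [e, neighborFinset_rot, Finset.sum_image (fun a _ b _ e => rot_inj v e)]
    exact Finset.sum_congr rfl fun u _ => congrFun (hrotsol v) u
  -- the corner set
  set C : Finset (Fin n → Fin 3) := {corner n 0, corner n 1, corner n 2} with hC
  have hmemC : ∀ s, s ∈ C ↔ ∃ p : Fin 3, s = corner n p := by
    intro s
    rw [hC]
    simp only [mem_insert, mem_singleton]
    constructor
    · rintro (e | e | e)
      exacts [⟨0, e⟩, ⟨1, e⟩, ⟨2, e⟩]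
    · rintro ⟨p, rfl⟩
      have : p = 0 ∨ p = 1 ∨ p = 2 := by omega
      rcases this with rfl | rfl | rfl
      exacts [Or.inl rfl, Or.inr (Or.inl rfl), Or.inr (Or.inr rfl)]
  have hCne : ∀ s ∈ univ \ C, ∀ p : Fin 3, s ≠ corner n p := by
    intro s hs p e
    rw [mem_sdiff] at hs
    exact hs.2 ((hmemC s).2 ⟨p, e⟩)
  have hc01 : corner n 0 ≠ corner n 1 := fun e => by
    have := corner_injective hn e; simp at this
  have hc02 : corner n 0 ≠ corner n 2 := fun e => by
    have := corner_injective hn e; simp at this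
  have hc12 : corner n 1 ≠ corner n 2 := fun e => by
    have := corner_injective hn e; omega
  have hcardC : C.card = 3 := by
    rw [hC, card_insert_of_notMem (by
        rw [mem_insert, mem_singleton]
        rintro (e | e)
        exacts [hc01 e, hc02 e]),
      card_insert_of_notMem (by rw [mem_singleton]; exact hc12), card_singleton]
  have hcardU : (univ : Finset (Fin n → Fin 3)).card = 3 ^ n := by
    rw [Finset.card_univ, Fintype.card_fun]
    simp
  -- key recurrence, multiplied out
  have key : ∀ s ∈ univ \ C,
      (3 : ℝ) * h s = 3 + ∑ t ∈ (hanoi n).neighborFinset s, h t := by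
    intro s hs
    have hnc := hCne s hs
    have e := hrec s hnc
    rw [degree_eq_three hn s hnc] at e
    rw [e]
    push_cast
    ring
  -- double counting
  have hdouble : ∑ s ∈ univ, ∑ t ∈ (hanoi n).neighborFinset s, h t
      = ∑ t ∈ univ, ((hanoi n).degree t : ℝ) * h t := by
    have e1 : ∀ s : Fin n → Fin 3, ∑ t ∈ (hanoi n).neighborFinset s, h t
        = ∑ t ∈ univ, if (hanoi n).Adj s t then h t else 0 := by
      intro s
      rw [SimpleGraph.neighborFinset_eq_filter, Finset.sum_filter]
    calc ∑ s ∈ univ, ∑ t ∈ (hanoi n).neighborFinset s, h t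
        = ∑ s ∈ univ, ∑ t ∈ univ, if (hanoi n).Adj s t then h t else 0 := by
          exact Finset.sum_congr rfl fun s _ => e1 s
      _ = ∑ t ∈ univ, ∑ s ∈ univ, if (hanoi n).Adj s t then h t else 0 :=
          Finset.sum_comm
      _ = ∑ t ∈ univ, ((hanoi n).degree t : ℝ) * h t := by
          refine Finset.sum_congr rfl fun t _ => ?_
          have : ∀ s, (hanoi n).Adj s t ↔ (hanoi n).Adj t s := fun s =>
            SimpleGraph.adj_comm _ _ _
          rw [Finset.sum_congr rfl (fun s _ => by rw [if_congr (this s) rfl rfl]),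
            ← Finset.sum_filter, Finset.sum_const, nsmul_eq_mul]
          congr 1
          rw [SimpleGraph.degree, SimpleGraph.neighborFinset_eq_filter]
  -- degree times h equals 3 times h everywhere (h vanishes on corners)
  have hdeg3 : ∑ t ∈ univ, ((hanoi n).degree t : ℝ) * h t = ∑ t ∈ univ, 3 * h t := by
    refine Finset.sum_congr rfl fun t _ => ?_
    by_cases ht : ∃ p : Fin 3, t = corner n p
    · obtain ⟨p, rfl⟩ := ht
      rw [hcorner p, mul_zero, mul_zero]
    · push_neg at ht
      rw [degree_eq_three hn t ht]
      norm_num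
  -- sum the recurrence over the complement of C
  have hCzero : ∀ s ∈ C, h s = 0 := by
    intro s hs
    obtain ⟨p, rfl⟩ := (hmemC s).1 hs
    exact hcorner p
  have hsplit : ∀ f : (Fin n → Fin 3) → ℝ,
      ∑ s ∈ univ \ C, f s = ∑ s ∈ univ, f s - ∑ s ∈ C, f s := fun f =>
    Finset.sum_sdiff_eq_sub (Finset.subset_univ C)
  have hmain : ∑ s ∈ univ \ C, (3 : ℝ) * h s
      = ∑ s ∈ univ \ C, (3 + ∑ t ∈ (hanoi n).neighborFinset s, h t) :=
    Finset.sum_congr rfl key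
  rw [Finset.sum_add_distrib, Finset.sum_const, nsmul_eq_mul] at hmain
  rw [hsplit, hsplit] at hmain
  have hcards : (univ \ C).card = 3 ^ n - 3 := by
    rw [Finset.card_sdiff_of_subset (Finset.subset_univ C), hcardC, hcardU]
  have h3n : 3 ≤ 3 ^ n := by
    calc 3 = 3 ^ 1 := by norm_num
      _ ≤ 3 ^ n := Nat.pow_le_pow_right (by norm_num) hn
  have hC1 : ∑ s ∈ C, (3 : ℝ) * h s = 0 :=
    Finset.sum_eq_zero fun s hs => by rw [hCzero s hs, mul_zero]
  rw [hC1, hcards, hdouble, hdeg3] at hmain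
  -- now hmain : ∑_univ 3h - 0 = (3^n - 3) * 3 + (∑_univ 3h - ∑_C ∑_N h)
  have hA : ∑ s ∈ C, ∑ t ∈ (hanoi n).neighborFinset s, h t
      = 3 * ∑ t ∈ (hanoi n).neighborFinset (corner n 0), h t := by
    rw [hC, Finset.sum_insert (by
        rw [mem_insert, mem_singleton]
        rintro (e | e)
        exacts [hc01 e, hc02 e]),
      Finset.sum_insert (by rw [mem_singleton]; exact hc12), Finset.sum_singleton,
      hSym 1, hSym 2]
    ring
  rw [hA] at hmain
  have hcast : ((3 ^ n - 3 : ℕ) : ℝ) = (3 : ℝ) ^ n - 3 := by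
    push_cast [h3n]
    ring
  rw [hcast] at hmain
  have hS0 : ∑ t ∈ (hanoi n).neighborFinset (corner n 0), h t = (3 : ℝ) ^ n - 3 := by
    linarith
  rw [hS0]
  ring
end

section
/- Let n ≥ 1 and let p : (Fin n → Fin 3) → ℝ satisfy p(B) = 1, p(A) = p(C) = 0, and p(s) = (1/deg s)·Σ_{t adjacent to s} p(t) for every non-corner state s of the Hanoi graph H_n. Then p(s½) = 2·5^(n−1)/(5^n − 3^n). (This is q₂(n), the probability that the random walk started with the largest disk on the second peg and the rest on the first peg ends with all disks on the second peg.) -/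
/-- Adjacency in `hanoi (m+1)` in terms of `Fin.snoc`. -/
lemma hanoi_snoc_adj (m : ℕ) (s' t' : Fin m → Fin 3) (i j : Fin 3) :
    (hanoi (m+1)).Adj (Fin.snoc s' i) (Fin.snoc t' j) ↔
      (i = j ∧ (hanoi m).Adj s' t') ∨
      (s' = t' ∧ i ≠ j ∧ ∀ k : Fin m, s' k ≠ i ∧ s' k ≠ j) := by
  constructor
  · rintro ⟨k, h1, h2, h3⟩
    rcases Fin.eq_castSucc_or_eq_last k with ⟨k', rfl⟩ | rfl
    · left
      have hlast := h1 (Fin.last m) (Fin.castSucc_lt_last k').ne'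
      simp only [Fin.snoc_last] at hlast
      refine ⟨hlast, k', fun j' hj' => ?_, ?_, fun j' hj' => ?_⟩
      · have := h1 (Fin.castSucc j') (by simpa using hj')
        simpa using this
      · simpa using h2
      · have := h3 (Fin.castSucc j') (by simpa using hj')
        simpa using this
    · right
      refine ⟨funext fun j' => ?_, ?_, fun j' => ?_⟩
      · have := h1 (Fin.castSucc j') (Fin.castSucc_lt_last j').ne
        simpa using this
      · simpa using h2
      · have := h3 (Fin.castSucc j') (Fin.castSucc_lt_last j')
        simpa using this
  · rintro (⟨rfl, k', h1, h2, h3⟩ | ⟨rfl, hij, h⟩)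
    · refine ⟨Fin.castSucc k', fun j hj => ?_, by simpa using h2, fun j hj => ?_⟩
      · rcases Fin.eq_castSucc_or_eq_last j with ⟨j', rfl⟩ | rfl
        · simpa using h1 j' (by simpa using hj)
        · simp
      · rcases Fin.eq_castSucc_or_eq_last j with ⟨j', rfl⟩ | rfl
        · simpa using h3 j' (by simpa using hj)
        · exact absurd hj (by simp [Fin.lt_iff_val_lt_val])
    · refine ⟨Fin.last m, fun j hj => ?_, by simpa using hij, fun j hj => ?_⟩
      · rcases Fin.eq_castSucc_or_eq_last j with ⟨j', rfl⟩ | rfl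
        · simp
        · exact absurd rfl hj
      · rcases Fin.eq_castSucc_or_eq_last j with ⟨j', rfl⟩ | rfl
        · simpa using h j'
        · exact absurd hj (lt_irrefl _)

/-- The third peg. -/
def other3 (i j : Fin 3) : Fin 3 := ⟨(3 - (i:ℕ) - (j:ℕ)) % 3, Nat.mod_lt _ (by norm_num)⟩

lemma fin3_third (i j x : Fin 3) (hij : i ≠ j) (hxi : x ≠ i) (hxj : x ≠ j) :
    x = other3 i j := by revert i j x; decide

lemma other3_ne_left (i j : Fin 3) (hij : i ≠ j) : other3 i j ≠ i := by revert i j; decide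
lemma other3_ne_right (i j : Fin 3) (hij : i ≠ j) : other3 i j ≠ j := by revert i j; decide

lemma snoc_inj {m : ℕ} {i : Fin 3} : Function.Injective
    (fun s' : Fin m → Fin 3 => (Fin.snoc s' i : Fin (m+1) → Fin 3)) := by
  intro a b h
  have := congrArg Fin.init h
  simpa [Fin.init_snoc] using this

lemma snoc_const {m : ℕ} (c : Fin 3) :
    (Fin.snoc (fun _ => c) c : Fin (m+1) → Fin 3) = fun _ => c := by
  funext j
  rcases Fin.eq_castSucc_or_eq_last j with ⟨j', rfl⟩ | rfl <;> simp

/-- Neighborhood of a non-perfect extended state: no large-disk move. -/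
lemma nbhd_snoc_of_nonconst {m : ℕ} (s' : Fin m → Fin 3) (i : Fin 3)
    (h : ∀ c, s' ≠ fun _ => c) :
    (hanoi (m+1)).neighborFinset (Fin.snoc s' i) =
      ((hanoi m).neighborFinset s').image (fun t' => Fin.snoc t' i) := by
  ext t
  rw [SimpleGraph.mem_neighborFinset, Finset.mem_image]
  constructor
  · intro hadj
    rw [← Fin.snoc_init_self t, hanoi_snoc_adj] at hadj
    rcases hadj with ⟨rfl, hadj⟩ | ⟨_, hij, hall⟩
    · exact ⟨Fin.init t, (SimpleGraph.mem_neighborFinset _ _ _).2 hadj, Fin.snoc_init_self t⟩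
    · exact absurd (funext fun k => fin3_third _ _ _ hij (hall k).1 (hall k).2)
        (h (other3 i (t (Fin.last m))))
  · rintro ⟨t', ht', rfl⟩
    rw [hanoi_snoc_adj]
    exact Or.inl ⟨rfl, (SimpleGraph.mem_neighborFinset _ _ _).1 ht'⟩

/-- Neighborhood of a junction vertex (all small disks on `c ≠ i`, large disk on `i`). -/
lemma nbhd_snoc_junction {m : ℕ} (hm : 1 ≤ m) (c i : Fin 3) (hci : c ≠ i) :
    (hanoi (m+1)).neighborFinset (Fin.snoc (fun _ => c) i) =
      insert (Fin.snoc (fun _ => c) (other3 c i))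
        (((hanoi m).neighborFinset (fun _ => c)).image (fun t' => Fin.snoc t' i)) := by
  ext t
  rw [SimpleGraph.mem_neighborFinset, Finset.mem_insert, Finset.mem_image]
  constructor
  · intro hadj
    rw [← Fin.snoc_init_self t, hanoi_snoc_adj] at hadj
    rcases hadj with ⟨rfl, hadj⟩ | ⟨hst, hij, hall⟩
    · exact Or.inr ⟨Fin.init t, (SimpleGraph.mem_neighborFinset _ _ _).2 hadj,
        Fin.snoc_init_self t⟩
    · left
      have hk0 : (0 : ℕ) < m := hm
      have hlc : t (Fin.last m) ≠ c := fun hh => (hall ⟨0, hk0⟩).2 hh.symm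
      have hli : t (Fin.last m) ≠ i := fun hh => hij hh.symm
      have hlast : t (Fin.last m) = other3 c i := fin3_third c i _ hci hlc hli
      rw [← Fin.snoc_init_self t, ← hst, hlast]
  · rintro (rfl | ⟨t', ht', rfl⟩)
    · rw [hanoi_snoc_adj]
      refine Or.inr ⟨rfl, (other3_ne_right c i hci).symm, fun k => ⟨hci, ?_⟩⟩
      exact (other3_ne_left c i hci).symm
    · rw [hanoi_snoc_adj]
      exact Or.inl ⟨rfl, (SimpleGraph.mem_neighborFinset _ _ _).1 ht'⟩

/-- Neighborhood of a corner in `hanoi (m+1)`. -/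
lemma nbhd_snoc_corner {m : ℕ} (hm : 1 ≤ m) (c : Fin 3) :
    (hanoi (m+1)).neighborFinset (Fin.snoc (fun _ => c) c) =
      ((hanoi m).neighborFinset (fun _ => c)).image (fun t' => Fin.snoc t' c) := by
  ext t
  rw [SimpleGraph.mem_neighborFinset, Finset.mem_image]
  constructor
  · intro hadj
    rw [← Fin.snoc_init_self t, hanoi_snoc_adj] at hadj
    rcases hadj with ⟨rfl, hadj⟩ | ⟨hst, hij, hall⟩
    · exact ⟨Fin.init t, (SimpleGraph.mem_neighborFinset _ _ _).2 hadj, Fin.snoc_init_self t⟩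
    · exact absurd rfl (hall ⟨0, hm⟩).1
  · rintro ⟨t', ht', rfl⟩
    rw [hanoi_snoc_adj]
    exact Or.inl ⟨rfl, (SimpleGraph.mem_neighborFinset _ _ _).1 ht'⟩

/-- Corners have degree 2. -/
lemma degree_corner {m : ℕ} (hm : 1 ≤ m) (c : Fin 3) :
    (hanoi m).degree (fun _ => c) = 2 := by
  induction m with
  | zero => omega
  | succ k ih =>
    rcases Nat.eq_or_lt_of_le hm with h1 | h1
    · revert c
      have : k = 0 := by omega
      subst this
      decide
    · have hk : 1 ≤ k := by omega
      rw [SimpleGraph.degree, ← snoc_const c, nbhd_snoc_corner hk c,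
        Finset.card_image_of_injective _ snoc_inj]
      exact ih hk

/-- Discrete harmonicity away from the corners. -/
def HarmOn (n : ℕ) (p : (Fin n → Fin 3) → ℝ) : Prop :=
  ∀ s, (∀ q : Fin 3, s ≠ fun _ => q) →
    p s = (1 / ((hanoi n).degree s : ℝ)) * ∑ t ∈ (hanoi n).neighborFinset s, p t

lemma adj_comp {n : ℕ} (e : Equiv.Perm (Fin 3)) {s t : Fin n → Fin 3}
    (h : (hanoi n).Adj s t) : (hanoi n).Adj (e ∘ s) (e ∘ t) := by
  obtain ⟨k, h1, h2, h3⟩ := h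
  exact ⟨k, fun j hj => congrArg e (h1 j hj), fun hh => h2 (e.injective hh),
    fun j hj => ⟨fun hh => (h3 j hj).1 (e.injective hh),
      fun hh => (h3 j hj).2 (e.injective hh)⟩⟩

lemma adj_comp_iff {n : ℕ} (e : Equiv.Perm (Fin 3)) (s t : Fin n → Fin 3) :
    (hanoi n).Adj (e ∘ s) (e ∘ t) ↔ (hanoi n).Adj s t := by
  refine ⟨fun h => ?_, adj_comp e⟩
  have := adj_comp e.symm h
  simpa [Function.comp_assoc, Function.comp_def] using this

lemma nbhd_comp {n : ℕ} (e : Equiv.Perm (Fin 3)) (s : Fin n → Fin 3) :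
    (hanoi n).neighborFinset (e ∘ s) =
      ((hanoi n).neighborFinset s).image (fun t => e ∘ t) := by
  ext t
  rw [SimpleGraph.mem_neighborFinset, Finset.mem_image]
  constructor
  · intro h
    refine ⟨e.symm ∘ t, (SimpleGraph.mem_neighborFinset _ _ _).2 ?_, ?_⟩
    · rw [← adj_comp_iff e]
      convert h using 1
      funext j; simp
    · funext j; simp
  · rintro ⟨t', ht', rfl⟩
    exact adj_comp e ((SimpleGraph.mem_neighborFinset _ _ _).1 ht')

lemma comp_inj {n : ℕ} (e : Equiv.Perm (Fin 3)) :
    Function.Injective (fun t : Fin n → Fin 3 => e ∘ t) := by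
  intro a b h
  funext j
  exact e.injective (congrFun h j)

lemma harmOn_comp {n : ℕ} (e : Equiv.Perm (Fin 3)) {p : (Fin n → Fin 3) → ℝ}
    (hp : HarmOn n p) : HarmOn n (fun s => p (e ∘ s)) := by
  intro s hs
  have hs' : ∀ q : Fin 3, (e ∘ s) ≠ fun _ => q := by
    intro q hq
    refine hs (e.symm q) (funext fun j => ?_)
    have := congrFun hq j
    simp only [Function.comp_apply] at this
    simp [← this]
  have := hp (e ∘ s) hs'
  show p (e ∘ s) = _ * ∑ t ∈ (hanoi n).neighborFinset s, p (e ∘ t)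
  rw [this, SimpleGraph.degree, SimpleGraph.degree, nbhd_comp,
    Finset.card_image_of_injective _ (comp_inj e), Finset.sum_image
      (fun a _ b _ h => comp_inj e h)]

lemma harmOn_restrict {m : ℕ} (i : Fin 3) {p : (Fin (m+1) → Fin 3) → ℝ}
    (hp : HarmOn (m+1) p) : HarmOn m (fun s' => p (Fin.snoc s' i)) := by
  intro s' hs'
  have hnc : ∀ q : Fin 3, (Fin.snoc s' i : Fin (m+1) → Fin 3) ≠ fun _ => q := by
    intro q hq
    refine hs' q (funext fun k => ?_)
    have := congrFun hq (Fin.castSucc k)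
    simpa using this
  have := hp (Fin.snoc s' i) hnc
  show p (Fin.snoc s' i) = _ * ∑ t ∈ (hanoi m).neighborFinset s', p (Fin.snoc t i)
  rw [this, SimpleGraph.degree, SimpleGraph.degree, nbhd_snoc_of_nonconst s' i hs',
    Finset.card_image_of_injective _ snoc_inj, Finset.sum_image
      (fun a _ b _ h => snoc_inj h)]

/-- The sequence `y_m = 2·3^(m-1)/(5^m − 3^m)` (written without truncated subtraction). -/
noncomputable def yv (m : ℕ) : ℝ := 2 * 3^m / (3 * (5^m - 3^m))

lemma pow53_pos {m : ℕ} (hm : 1 ≤ m) : (0:ℝ) < 5^m - 3^m := by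
  have h3 : (3:ℝ)^m < 5^m := by
    apply pow_lt_pow_left₀ (by norm_num) (by norm_num)
    omega
  linarith

lemma yv_pos {m : ℕ} (hm : 1 ≤ m) : 0 < yv m := by
  have := pow53_pos hm
  unfold yv
  positivity

/-- The inductive statement: value of the sum of `p` over the two neighbors of a corner. -/
def INVStmt (m : ℕ) : Prop :=
  ∀ p : (Fin m → Fin 3) → ℝ, HarmOn m p →
    ∑ t ∈ (hanoi m).neighborFinset (fun _ => (0 : Fin 3)), p t
      = (2 - 2 * yv m) * p (fun _ => 0) + yv m * (p (fun _ => 1) + p (fun _ => 2))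

/-- Permuted version of the inductive statement. -/
lemma INVStmt_perm {m : ℕ} (h : INVStmt m) (p : (Fin m → Fin 3) → ℝ)
    (hp : HarmOn m p) (q0 q1 q2 : Fin 3) (h01 : q0 ≠ q1) (h02 : q0 ≠ q2) (h12 : q1 ≠ q2) :
    ∑ t ∈ (hanoi m).neighborFinset (fun _ => q0), p t
      = (2 - 2 * yv m) * p (fun _ => q0) + yv m * (p (fun _ => q1) + p (fun _ => q2)) := by
  have hinj : Function.Injective ![q0, q1, q2] := by
    intro x y hxy
    fin_cases x <;> fin_cases y <;> simp_all
  let e : Equiv.Perm (Fin 3) := Equiv.ofBijective _ (Finite.injective_iff_bijective.1 hinj)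
  have he0 : e 0 = q0 := rfl
  have he1 : e 1 = q1 := rfl
  have he2 : e 2 = q2 := rfl
  have hpe := h (fun s => p (e ∘ s)) (harmOn_comp e hp)
  have hc : ∀ j : Fin 3, (e ∘ fun _ : Fin m => j) = (fun _ => e j) := fun _ => rfl
  have hkey : ∑ t ∈ (hanoi m).neighborFinset (fun _ => q0), p t
      = ∑ t ∈ (hanoi m).neighborFinset (fun _ => (0:Fin 3)), p (e ∘ t) := by
    rw [show (fun _ : Fin m => q0) = e ∘ (fun _ => (0:Fin 3)) by rw [hc, he0],
      nbhd_comp, Finset.sum_image (fun a _ b _ hh => comp_inj e hh)]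
  rw [hkey, hpe]
  simp only [hc, he0, he1, he2]

/-- The junction equation at the vertex with all small disks on `c`, large disk on `i`. -/
lemma junction_eq {m : ℕ} (hm : 1 ≤ m) (hS : INVStmt m)
    {p : (Fin (m+1) → Fin 3) → ℝ} (hp : HarmOn (m+1) p) (c i : Fin 3) (hci : c ≠ i) :
    (1 + 2 * yv m) * p (Fin.snoc (fun _ => c) i)
      = yv m * (p (fun _ => i) + p (Fin.snoc (fun _ => other3 c i) i))
        + p (Fin.snoc (fun _ => c) (other3 c i)) := by
  set s : Fin (m+1) → Fin 3 := Fin.snoc (fun _ => c) i with hs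
  have hnc : ∀ q : Fin 3, s ≠ fun _ => q := by
    intro q hq
    have h1 : c = q := by
      have h0 := congrArg Fin.init hq
      rw [hs, Fin.init_snoc] at h0
      have := congrFun h0 ⟨0, hm⟩
      simpa [Fin.init] using this
    have h2 : i = q := by
      have := congrFun hq (Fin.last m)
      simpa [hs] using this
    exact hci (h1.trans h2.symm)
  have hnotmem : (Fin.snoc (fun _ => c) (other3 c i) : Fin (m+1) → Fin 3) ∉
      ((hanoi m).neighborFinset (fun _ => c)).image (fun t' => Fin.snoc t' i) := by
    intro hmem
    obtain ⟨t', _, ht'⟩ := Finset.mem_image.1 hmem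
    have := congrFun ht' (Fin.last m)
    simp only [Fin.snoc_last] at this
    exact other3_ne_right c i hci this.symm
  have hdeg : ((hanoi (m+1)).degree s : ℝ) = 3 := by
    rw [hs, SimpleGraph.degree, nbhd_snoc_junction hm c i hci,
      Finset.card_insert_of_notMem hnotmem,
      Finset.card_image_of_injective _ snoc_inj]
    rw [show ((hanoi m).neighborFinset (fun _ => c)).card = (hanoi m).degree (fun _ => c) from rfl,
      degree_corner hm c]
    norm_num
  have hsum : ∑ t ∈ (hanoi (m+1)).neighborFinset s, p t
      = p (Fin.snoc (fun _ => c) (other3 c i))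
        + ∑ t' ∈ (hanoi m).neighborFinset (fun _ => c), p (Fin.snoc t' i) := by
    rw [hs, nbhd_snoc_junction hm c i hci, Finset.sum_insert hnotmem,
      Finset.sum_image (fun a _ b _ hh => snoc_inj hh)]
  have hinner := INVStmt_perm hS (fun s' => p (Fin.snoc s' i)) (harmOn_restrict i hp)
    c i (other3 c i) hci (fun hh => other3_ne_left c i hci hh.symm)
    (fun hh => other3_ne_right c i hci hh.symm)
  have hsnoc : (Fin.snoc (fun _ : Fin m => i) i : Fin (m+1) → Fin 3) = fun _ => i :=
    snoc_const i
  rw [hsnoc] at hinner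
  have hps := hp s hnc
  rw [hdeg, hsum, hinner] at hps
  rw [hs] at hps ⊢
  linarith [hps]

set_option maxHeartbeats 1000000 in
/-- Solving the junction linear system of the Hanoi graph recursion. -/
lemma hanoi_solve (y a b c u01 u02 u10 u12 u20 u21 : ℝ) (hy : 0 < y)
    (e01 : (1+2*y)*u01 = y*(a+u02) + u21)
    (e02 : (1+2*y)*u02 = y*(a+u01) + u12)
    (e10 : (1+2*y)*u10 = y*(b+u12) + u20)
    (e12 : (1+2*y)*u12 = y*(b+u10) + u02)
    (e20 : (1+2*y)*u20 = y*(c+u21) + u10)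
    (e21 : (1+2*y)*u21 = y*(c+u20) + u01) :
    (5+3*y)*u10 = (2+3*y)*b + a + 2*c ∧
    (5+3*y)*(u01+u02) = 2*(2+3*y)*a + 3*(b+c) := by
  have wzero : ∀ w : ℝ, y * w^2 = 0 → w = 0 := by
    intro w h
    rcases mul_eq_zero.1 h with h | h
    · exact absurd h hy.ne'
    · exact pow_eq_zero_iff (by norm_num) |>.1 h
  set w01 : ℝ := (5+3*y)*u01 - ((2+3*y)*a + b + 2*c) with hw01
  set w02 : ℝ := (5+3*y)*u02 - ((2+3*y)*a + c + 2*b) with hw02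
  set w10 : ℝ := (5+3*y)*u10 - ((2+3*y)*b + a + 2*c) with hw10
  set w12 : ℝ := (5+3*y)*u12 - ((2+3*y)*b + c + 2*a) with hw12
  set w20 : ℝ := (5+3*y)*u20 - ((2+3*y)*c + a + 2*b) with hw20
  set w21 : ℝ := (5+3*y)*u21 - ((2+3*y)*c + b + 2*a) with hw21
  have E01 : (1+2*y)*w01 = y*w02 + w21 := by rw [hw01, hw02, hw21]; linear_combination (5+3*y)*e01
  have E02 : (1+2*y)*w02 = y*w01 + w12 := by rw [hw01, hw02, hw12]; linear_combination (5+3*y)*e02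
  have E10 : (1+2*y)*w10 = y*w12 + w20 := by rw [hw10, hw12, hw20]; linear_combination (5+3*y)*e10
  have E12 : (1+2*y)*w12 = y*w10 + w02 := by rw [hw10, hw12, hw02]; linear_combination (5+3*y)*e12
  have E20 : (1+2*y)*w20 = y*w21 + w10 := by rw [hw20, hw21, hw10]; linear_combination (5+3*y)*e20
  have E21 : (1+2*y)*w21 = y*w20 + w01 := by rw [hw20, hw21, hw01]; linear_combination (5+3*y)*e21
  have key : y*(w01-w02)^2 + y*(w10-w12)^2 + y*(w20-w21)^2
      + (w01-w21)^2 + (w02-w12)^2 + (w10-w20)^2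
      + y*w01^2 + y*w02^2 + y*w10^2 + y*w12^2 + y*w20^2 + y*w21^2 = 0 := by
    linear_combination w01*E01 + w02*E02 + w10*E10 + w12*E12 + w20*E20 + w21*E21
  have nn : ∀ w : ℝ, 0 ≤ y * w^2 := fun w => mul_nonneg hy.le (sq_nonneg w)
  have h10 : w10 = 0 := wzero _ (le_antisymm (by
      linarith [key, nn (w01-w02), nn (w10-w12), nn (w20-w21), sq_nonneg (w01-w21),
        sq_nonneg (w02-w12), sq_nonneg (w10-w20), nn w01, nn w02, nn w12, nn w20, nn w21])
    (nn w10))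
  have h01 : w01 = 0 := wzero _ (le_antisymm (by
      linarith [key, nn (w01-w02), nn (w10-w12), nn (w20-w21), sq_nonneg (w01-w21),
        sq_nonneg (w02-w12), sq_nonneg (w10-w20), nn w10, nn w02, nn w12, nn w20, nn w21])
    (nn w01))
  have h02 : w02 = 0 := wzero _ (le_antisymm (by
      linarith [key, nn (w01-w02), nn (w10-w12), nn (w20-w21), sq_nonneg (w01-w21),
        sq_nonneg (w02-w12), sq_nonneg (w10-w20), nn w10, nn w01, nn w12, nn w20, nn w21])
    (nn w02))
  constructor
  · linear_combination h10
  · linear_combination h01 + h02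

lemma yv_one : yv 1 = 1 := by norm_num [yv]

lemma yv_rel (m : ℕ) (hm : 1 ≤ m) : yv (m+1) * (5 + 3 * yv m) = 3 * yv m := by
  have h1 : (0:ℝ) < 5^m - 3^m := pow53_pos hm
  have h2 : (0:ℝ) < 5^(m+1) - 3^(m+1) := pow53_pos (by omega)
  unfold yv
  field_simp
  ring

lemma INV_step (m : ℕ) (hm : 1 ≤ m) (hS : INVStmt m) : INVStmt (m+1) := by
  intro p hp
  have Y := yv m
  set a := p (fun _ => (0:Fin 3)) with ha
  set b := p (fun _ => (1:Fin 3)) with hb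
  set c := p (fun _ => (2:Fin 3)) with hc
  set u01 := p (Fin.snoc (fun _ => (1:Fin 3)) 0) with hu01
  set u02 := p (Fin.snoc (fun _ => (2:Fin 3)) 0) with hu02
  set u10 := p (Fin.snoc (fun _ => (0:Fin 3)) 1) with hu10
  set u12 := p (Fin.snoc (fun _ => (2:Fin 3)) 1) with hu12
  set u20 := p (Fin.snoc (fun _ => (0:Fin 3)) 2) with hu20
  set u21 := p (Fin.snoc (fun _ => (1:Fin 3)) 2) with hu21
  have hsc : ∀ q : Fin 3, (Fin.snoc (fun _ : Fin m => q) q : Fin (m+1) → Fin 3) = fun _ => q :=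
    fun q => snoc_const q
  have e01 := junction_eq hm hS hp 1 0 (by decide)
  have e02 := junction_eq hm hS hp 2 0 (by decide)
  have e10 := junction_eq hm hS hp 0 1 (by decide)
  have e12 := junction_eq hm hS hp 2 1 (by decide)
  have e20 := junction_eq hm hS hp 0 2 (by decide)
  have e21 := junction_eq hm hS hp 1 2 (by decide)
  rw [show other3 1 0 = 2 from rfl] at e01
  rw [show other3 2 0 = 1 from rfl] at e02
  rw [show other3 0 1 = 2 from rfl] at e10
  rw [show other3 2 1 = 0 from rfl] at e12
  rw [show other3 0 2 = 1 from rfl] at e20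
  rw [show other3 1 2 = 0 from rfl] at e21
  rw [← hu01, ← hu02, ← ha, ← hu21] at e01
  rw [← hu02, ← hu01, ← ha, ← hu12] at e02
  rw [← hu10, ← hu12, ← hb, ← hu20] at e10
  rw [← hu12, ← hu10, ← hb, ← hu02] at e12
  rw [← hu20, ← hu21, ← hc, ← hu10] at e20
  rw [← hu21, ← hu20, ← hc, ← hu01] at e21
  obtain ⟨-, hkey⟩ := hanoi_solve (yv m) a b c u01 u02 u10 u12 u20 u21 (yv_pos hm)
    e01 e02 e10 e12 e20 e21
  -- compute the LHS sum via the corner decomposition and the inner inductive hypothesis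
  have hlhs : ∑ t ∈ (hanoi (m+1)).neighborFinset (fun _ => (0:Fin 3)), p t
      = (2 - 2 * yv m) * a + yv m * (u01 + u02) := by
    rw [← hsc 0, nbhd_snoc_corner hm 0, Finset.sum_image (fun x _ y _ hh => snoc_inj hh)]
    have := hS (fun s' => p (Fin.snoc s' 0)) (harmOn_restrict 0 hp)
    rw [this, hsc 0, ← ha, ← hu01, ← hu02]
  rw [hlhs]
  have hrel := yv_rel m hm
  have h53 : (0:ℝ) < 5 + 3 * yv m := by have := yv_pos hm; linarith
  apply mul_left_cancel₀ h53.ne'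
  linear_combination yv m * hkey + (2 * a - (b + c)) * hrel

/-- The corner-neighbor-sum lemma, by induction. -/
lemma INV (m : ℕ) (hm : 1 ≤ m) : INVStmt m := by
  induction m with
  | zero => omega
  | succ k ih =>
    rcases Nat.eq_or_lt_of_le hm with h1 | h1
    · -- base case m = 1
      intro p hp
      have hset : (hanoi 1).neighborFinset (fun _ => (0:Fin 3)) =
          {(fun _ => (1:Fin 3) : Fin 1 → Fin 3), (fun _ => (2:Fin 3))} := by
        have : k = 0 := by omega
        subst this
        decide
      have : k = 0 := by omega
      subst this
      rw [hset, Finset.sum_pair (by decide : (fun _ => (1:Fin 3) : Fin 1 → Fin 3) ≠ fun _ => 2)]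
      rw [yv_one]
      ring
    · exact INV_step k (by omega) (ih (by omega))
/-- `q₂(n)`, the probability that the random walk started at `s½` first
meets the corner set at `B`, equals `2·5^(n−1)/(5^n − 3^n)`. -/
theorem hanoi_q_two (n : ℕ) (hn : 1 ≤ n)
    (p : (Fin n → Fin 3) → ℝ)
    (hB : p (corner n 1) = 1) (hA : p (corner n 0) = 0) (hC : p (corner n 2) = 0)
    (hrec : ∀ s, (∀ q : Fin 3, s ≠ corner n q) →
      p s = (1 / ((hanoi n).degree s : ℝ)) * ∑ t ∈ (hanoi n).neighborFinset s, p t) :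
    p (halfState n) = 2 * (5 : ℝ) ^ (n - 1) / ((5 : ℝ) ^ n - 3 ^ n) := by
  have hp' : HarmOn n p := fun s hs => hrec s hs
  rcases Nat.lt_or_ge n 2 with h2 | h2
  · -- n = 1
    have hn1 : n = 1 := by omega
    subst hn1
    have hhalf : halfState 1 = corner 1 1 := by
      funext k
      simp [halfState, corner]
    rw [hhalf, hB]
    norm_num
  · obtain ⟨m, rfl⟩ : ∃ m, n = m + 1 := ⟨n - 1, by omega⟩
    have hm : 1 ≤ m := by omega
    have hS : INVStmt m := INV m hm
    set a := p (fun _ => (0:Fin 3)) with ha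
    set b := p (fun _ => (1:Fin 3)) with hb
    set c := p (fun _ => (2:Fin 3)) with hc
    have ha0 : a = 0 := hA
    have hb1 : b = 1 := hB
    have hc0 : c = 0 := hC
    set u01 := p (Fin.snoc (fun _ => (1:Fin 3)) 0) with hu01
    set u02 := p (Fin.snoc (fun _ => (2:Fin 3)) 0) with hu02
    set u10 := p (Fin.snoc (fun _ => (0:Fin 3)) 1) with hu10
    set u12 := p (Fin.snoc (fun _ => (2:Fin 3)) 1) with hu12
    set u20 := p (Fin.snoc (fun _ => (0:Fin 3)) 2) with hu20
    set u21 := p (Fin.snoc (fun _ => (1:Fin 3)) 2) with hu21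
    have e01 := junction_eq hm hS hp' 1 0 (by decide)
    have e02 := junction_eq hm hS hp' 2 0 (by decide)
    have e10 := junction_eq hm hS hp' 0 1 (by decide)
    have e12 := junction_eq hm hS hp' 2 1 (by decide)
    have e20 := junction_eq hm hS hp' 0 2 (by decide)
    have e21 := junction_eq hm hS hp' 1 2 (by decide)
    rw [show other3 1 0 = 2 from rfl] at e01
    rw [show other3 2 0 = 1 from rfl] at e02
    rw [show other3 0 1 = 2 from rfl] at e10
    rw [show other3 2 1 = 0 from rfl] at e12
    rw [show other3 0 2 = 1 from rfl] at e20
    rw [show other3 1 2 = 0 from rfl] at e21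
    rw [← hu01, ← hu02, ← ha, ← hu21] at e01
    rw [← hu02, ← hu01, ← ha, ← hu12] at e02
    rw [← hu10, ← hu12, ← hb, ← hu20] at e10
    rw [← hu12, ← hu10, ← hb, ← hu02] at e12
    rw [← hu20, ← hu21, ← hc, ← hu10] at e20
    rw [← hu21, ← hu20, ← hc, ← hu01] at e21
    obtain ⟨hkey, -⟩ := hanoi_solve (yv m) a b c u01 u02 u10 u12 u20 u21 (yv_pos hm)
      e01 e02 e10 e12 e20 e21
    rw [ha0, hb1, hc0] at hkey
    have hhalf : halfState (m+1) = Fin.snoc (fun _ => (0:Fin 3)) 1 := by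
      funext k
      rcases Fin.eq_castSucc_or_eq_last k with ⟨j, rfl⟩ | rfl
      · simp [halfState, Fin.snoc_castSucc, j.isLt]
      · simp [halfState]
    rw [hhalf, ← hu10]
    have h1 : (0:ℝ) < 5^m - 3^m := pow53_pos hm
    have h2 : (0:ℝ) < 5^(m+1) - 3^(m+1) := pow53_pos (by omega)
    have hY : yv m * (3*(5^m - 3^m)) = 2*3^m := by
      unfold yv
      field_simp
    simp only [Nat.add_sub_cancel]
    rw [eq_div_iff h2.ne']
    linear_combination ((5:ℝ)^m - 3^m) * hkey + (1 - u10) * hY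
end
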